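/- Let A be a noetherian, locally finite, ℕ-graded prime projectively simple k-algebra, let n ≥ 2, and let B = A^{(n)} = ⊕_{i≥0} A_{ni} be the n-th Veronese subring (graded by B_i = A_{ni}). If B is a prime ring and A is finitely generated as a right B-module or as a left B-module, then B is projectively simple. -/

import Mathlib

/-!
STATEMENT 9: Let `A` be a noetherian, locally finite, ℕ-graded prime projectively simple
`k`-algebra, let `n ≥ 2`, and let `B = A^{(n)} = ⊕_{i≥0} A_{ni}` be the `n`-th Veronese
subring (graded by `Bᵢ = A_{ni}`).  If `B` is a prime ring and `A` is finitely generated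
as a right `B`-module or as a left `B`-module, then `B` is projectively simple.

`B` is specified as the subalgebra of `A` whose elements are exactly those all of whose
homogeneous components of degree not divisible by `n` vanish; with this description
the grading `Bᵢ = A_{ni}` is the restriction of the grading of `A`, and a two-sided
ideal `I ⊆ B` is graded for it iff it is closed under taking homogeneous components
with respect to the grading of `A`.  Projective simplicity of a graded subalgebra
`B ⊆ A` is expressed internally to `A`; taking `B = ⊤` recovers projective simplicity
of `A` itself.
-/

/-- Projective simplicity of a graded subalgebra `B` of the ℕ-graded `k`-algebra `A`,
with grading `Bₙ = B ∩ Aₙ`. -/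
def SubProjSimple {k A : Type*} [Field k] [Ring A] [Algebra k A]
    (𝒜 : ℕ → Submodule k A) [GradedAlgebra 𝒜] (B : Subalgebra k A) : Prop :=
  ¬ FiniteDimensional k B ∧
  ∀ I : Submodule k A, I ≤ B.toSubmodule → I ≠ ⊥ →
    (∀ b ∈ B, ∀ x ∈ I, b * x ∈ I ∧ x * b ∈ I) →
    (∀ x ∈ I, ∀ n, (DirectSum.decompose 𝒜 x n : A) ∈ I) →
    FiniteDimensional k (↥B.toSubmodule ⧸ (I.comap B.toSubmodule.subtype))

/-
If `B` were finite-dimensional, so would be `A`, a finitely generated `B`-module.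
Given a nonzero graded ideal `I` of `B`, primeness of `B` (which may be tested on homogeneous
elements) produces for each residue `c` mod `n` a nonzero homogeneous `d_c ∈ B` with
`u d_c w ∈ I` for all homogeneous `u`, `w` of degrees `≡ c` and `≡ -c`. Such elements are stable
under multiplication by homogeneous elements of `B`, so a nonzero product
`d_0 y_1 d_1 ⋯ y_{n-1} d_{n-1}` works for all residues at once. The ideal `A d A` of `A` is then
graded and nonzero, and its components of degree divisible by `n` lie in `I`, so
`A d A ∩ B ⊆ I`. Hence `B / I` is a quotient of `B / (A d A ∩ B) ↪ A / A d A`, which is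
finite-dimensional as `A` is projectively simple.
-/

open DirectSum Pointwise

theorem Module.Finite.of_forall_mem_closure_mul {k A : Type*} [CommRing k] [Ring A]
    [Algebra k A] {X Y : Set A} (hX : (Submodule.span k X).FG) (hY : (Submodule.span k Y).FG)
    (h : ∀ a : A, a ∈ AddSubgroup.closure (X * Y)) : Module.Finite k A := by
  have hspan : Submodule.span k (X * Y) = ⊤ :=
    eq_top_iff.mpr fun a _ =>
      (AddSubgroup.closure_le (Submodule.span k _).toAddSubgroup).mpr Submodule.subset_span (h a)
  rw [Module.finite_def, ← hspan, ← Submodule.span_mul_span]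
  exact hX.mul hY

theorem Module.Finite.of_finite_subalgebra {k A : Type*} [CommRing k] [Ring A] [Algebra k A]
    {B : Subalgebra k A} [Module.Finite k B]
    (hfg : (∃ S : Finset A, ∀ a : A,
              a ∈ AddSubgroup.closure {y : A | ∃ s ∈ S, ∃ b ∈ B, y = s * b}) ∨
           (∃ S : Finset A, ∀ a : A,
              a ∈ AddSubgroup.closure {y : A | ∃ s ∈ S, ∃ b ∈ B, y = b * s})) :
    Module.Finite k A := by
  have hB : (Submodule.span k (B : Set A)).FG := by
    rw [← Subalgebra.coe_toSubmodule, Submodule.span_eq, ← Module.Finite.iff_fg]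
    assumption
  rcases hfg with ⟨S, hS⟩ | ⟨S, hS⟩
  · have hSB : {y | ∃ s ∈ S, ∃ b ∈ B, y = s * b} = (S : Set A) * B := by
      ext
      rw [Set.mem_mul]
      constructor <;> rintro ⟨a, ha, b, hb, rfl⟩ <;> exact ⟨a, ha, b, hb, rfl⟩
    exact of_forall_mem_closure_mul (Submodule.fg_span S.finite_toSet) hB fun a => hSB ▸ hS a
  · have hBS : {y | ∃ s ∈ S, ∃ b ∈ B, y = b * s} = (B : Set A) * S := by
      ext
      rw [Set.mem_mul]
      constructor <;> rintro ⟨a, ha, b, hb, rfl⟩ <;> exact ⟨b, hb, a, ha, rfl⟩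
    exact of_forall_mem_closure_mul hB (Submodule.fg_span S.finite_toSet) fun a => hBS ▸ hS a

theorem Submodule.finiteDimensional_quotient_comap_of_inf_le {k V : Type*} [Field k]
    [AddCommGroup V] [Module k V] {P Q N J : Submodule k V} (hPQ : P ≤ Q) (hNJ : N ⊓ P ≤ J)
    [FiniteDimensional k (Q ⧸ N.comap Q.subtype)] :
    FiniteDimensional k (P ⧸ J.comap P.subtype) := by
  let f := (N.comap Q.subtype).mkQ ∘ₗ Submodule.inclusion hPQ
  have hker : LinearMap.ker f ≤ J.comap P.subtype := fun x hx =>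
    hNJ ⟨(Submodule.Quotient.mk_eq_zero (N.comap Q.subtype)).mp hx, x.2⟩
  have := f.quotKerEquivRange.symm.finiteDimensional
  exact Module.Finite.of_surjective _ (Submodule.factor_surjective hker)

section Decomposition

variable {ι R M : Type*} [DecidableEq ι] [Semiring R] [AddCommMonoid M] [Module R M]
  (ℳ : ι → Submodule R M) [Decomposition ℳ]

theorem Submodule.isHomogeneous_span {s : Set M}
    (hs : ∀ x ∈ s, SetLike.IsHomogeneousElem ℳ x) :
    SetLike.IsHomogeneous ℳ (Submodule.span R s) := by
  intro i m hm
  induction hm using Submodule.span_induction with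
  | mem x hx =>
    obtain ⟨j, hj⟩ := hs x hx
    rw [decompose_of_mem ℳ hj, coe_of_apply]
    split_ifs
    exacts [Submodule.subset_span hx, zero_mem _]
  | zero => simp
  | add x y _ _ hx hy => simpa using add_mem hx hy
  | smul r x _ hx =>
    rw [decompose_smul, DFinsupp.smul_apply, Submodule.coe_smul]
    exact Submodule.smul_mem _ r hx

theorem Submodule.exists_isHomogeneousElem_ne_zero_mem {p : Submodule R M}
    (hp : SetLike.IsHomogeneous ℳ p) (hp0 : p ≠ ⊥) :
    ∃ x ∈ p, x ≠ 0 ∧ SetLike.IsHomogeneousElem ℳ x := by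
  obtain ⟨x, hx, hx0⟩ := p.ne_bot_iff.mp hp0
  by_contra! h
  apply hx0
  rw [← (decompose ℳ).symm_apply_apply x, show decompose ℳ x = 0 from DFinsupp.ext fun i =>
    Subtype.ext (by_contra fun hi => h _ (hp i hx) hi ⟨i, (decompose ℳ x i).2⟩),
    decompose_symm_zero]

end Decomposition

section DecompositionRing

variable {ι R A : Type*} [DecidableEq ι] [Semiring R] [Semiring A] [Module R A]
  (𝒜 : ι → Submodule R A) [Decomposition 𝒜] {N : Submodule R A} {y : A}

theorem Submodule.mul_mem_of_forall_homogeneous_mul_mem (h : ∀ i, ∀ a ∈ 𝒜 i, a * y ∈ N)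
    (a : A) : a * y ∈ N := by
  classical
  rw [← sum_support_decompose 𝒜 a, Finset.sum_mul]
  exact sum_mem fun i _ => h i _ (decompose 𝒜 a i).2

theorem Submodule.mul_mem_of_forall_mul_homogeneous_mem (h : ∀ i, ∀ a ∈ 𝒜 i, y * a ∈ N)
    (a : A) : y * a ∈ N := by
  classical
  rw [← sum_support_decompose 𝒜 a, Finset.mul_sum]
  exact sum_mem fun i _ => h i _ (decompose 𝒜 a i).2

end DecompositionRing

section Veronese

variable {k A : Type*} [CommSemiring k] [Semiring A] [Algebra k A]
  (𝒜 : ℕ → Submodule k A) [GradedAlgebra 𝒜] (n : ℕ)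

def IsVeroneseHomogeneous (x : A) : Prop :=
  ∃ e : ℕ, (e : ZMod n) = 0 ∧ x ∈ 𝒜 e

def IsVeroneseSubalgebra (B : Subalgebra k A) : Prop :=
  ∀ x : A, x ∈ B ↔ ∀ m : ℕ, ¬ n ∣ m → (decompose 𝒜 x m : A) = 0

variable {𝒜 n}

theorem IsVeroneseHomogeneous.mul {x y : A} (hx : IsVeroneseHomogeneous 𝒜 n x)
    (hy : IsVeroneseHomogeneous 𝒜 n y) : IsVeroneseHomogeneous 𝒜 n (x * y) := by
  obtain ⟨e, he, hxe⟩ := hx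
  obtain ⟨f, hf, hyf⟩ := hy
  exact ⟨e + f, by push_cast; rw [he, hf, add_zero], SetLike.mul_mem_graded hxe hyf⟩

theorem IsVeroneseHomogeneous.mul_mul_of_add_eq_zero {u w m : A} {i j : ℕ} (hu : u ∈ 𝒜 i)
    (hw : w ∈ 𝒜 j) (hij : (i : ZMod n) + j = 0) (hm : IsVeroneseHomogeneous 𝒜 n m) :
    IsVeroneseHomogeneous 𝒜 n (u * m * w) := by
  obtain ⟨e, he, hme⟩ := hm
  exact ⟨i + e + j, by push_cast; linear_combination hij + he,
    SetLike.mul_mem_graded (SetLike.mul_mem_graded hu hme) hw⟩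

variable {B : Subalgebra k A}

theorem IsVeroneseHomogeneous.mem (hB : IsVeroneseSubalgebra 𝒜 n B) {x : A}
    (hx : IsVeroneseHomogeneous 𝒜 n x) : x ∈ B := by
  obtain ⟨e, he, hxe⟩ := hx
  refine (hB x).mpr fun m hm => decompose_of_mem_ne 𝒜 hxe fun hem => hm ?_
  rwa [← hem, ← ZMod.natCast_eq_zero_iff]

theorem IsVeroneseSubalgebra.decompose_eq_zero (hB : IsVeroneseSubalgebra 𝒜 n B) {x : A}
    (hx : x ∈ B) {m : ℕ} (hm : (m : ZMod n) ≠ 0) : (decompose 𝒜 x m : A) = 0 :=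
  (hB x).mp hx m fun hnm => hm ((ZMod.natCast_eq_zero_iff m n).mpr hnm)

theorem IsVeroneseSubalgebra.isVeroneseHomogeneous (hB : IsVeroneseSubalgebra 𝒜 n B)
    {x : A} (hx : x ∈ B) (hx0 : x ≠ 0) (hxh : SetLike.IsHomogeneousElem 𝒜 x) :
    IsVeroneseHomogeneous 𝒜 n x := by
  obtain ⟨e, hxe⟩ := hxh
  refine ⟨e, not_not.mp fun he => hx0 ?_, hxe⟩
  rw [← hB.decompose_eq_zero hx he, decompose_of_mem_same 𝒜 hxe]

theorem IsVeroneseSubalgebra.exists_mul_mul_ne_zero (hB : IsVeroneseSubalgebra 𝒜 n B)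
    (hBprime : ∀ a ∈ B, ∀ b ∈ B, (∀ x ∈ B, a * x * b = 0) → a = 0 ∨ b = 0) {a b : A}
    (ha : a ∈ B) (hb : b ∈ B) (ha0 : a ≠ 0) (hb0 : b ≠ 0) :
    ∃ y, IsVeroneseHomogeneous 𝒜 n y ∧ a * y * b ≠ 0 := by
  classical
  by_contra! h
  refine (hBprime a ha b hb fun y hy => ?_).elim ha0 hb0
  rw [← sum_support_decompose 𝒜 y, Finset.mul_sum, Finset.sum_mul]
  refine Finset.sum_eq_zero fun m _ => ?_
  by_cases hm : (m : ZMod n) = 0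
  · exact h _ ⟨m, hm, (decompose 𝒜 y m).2⟩
  · rw [hB.decompose_eq_zero hy hm, mul_zero, zero_mul]

end Veronese

section Sandwich

variable {k A : Type*} [CommSemiring k] [Semiring A] [Algebra k A]
  {𝒜 : ℕ → Submodule k A} [GradedAlgebra 𝒜] {n : ℕ} {B : Subalgebra k A}
  {I : Submodule k A}

variable (𝒜 n I) in
def SandwichMem (c : ZMod n) (d : A) : Prop :=
  ∀ ⦃i j : ℕ⦄, (i : ZMod n) = c → (i : ZMod n) + j = 0 → ∀ u ∈ 𝒜 i, ∀ w ∈ 𝒜 j, u * d * w ∈ I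

theorem SandwichMem.mul_left {c : ZMod n} {d y : A} (hd : SandwichMem 𝒜 n I c d)
    (hy : IsVeroneseHomogeneous 𝒜 n y) : SandwichMem 𝒜 n I c (y * d) := by
  obtain ⟨e, he, hye⟩ := hy
  intro i j hi hij u hu w hw
  rw [← mul_assoc]
  exact hd (by push_cast; rw [he, add_zero, hi]) (by push_cast; linear_combination hij + he)
    _ (SetLike.mul_mem_graded hu hye) w hw

theorem SandwichMem.mul_right {c : ZMod n} {d y : A} (hd : SandwichMem 𝒜 n I c d)
    (hy : IsVeroneseHomogeneous 𝒜 n y) : SandwichMem 𝒜 n I c (d * y) := by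
  obtain ⟨e, he, hye⟩ := hy
  intro i j hi hij u hu w hw
  rw [mul_assoc, mul_assoc, ← mul_assoc u]
  exact hd hi (j := e + j) (by push_cast; linear_combination hij + he) u hu _
    (SetLike.mul_mem_graded hye hw)

theorem exists_sandwichMem (hB : IsVeroneseSubalgebra 𝒜 n B)
    (hBprime : ∀ a ∈ B, ∀ b ∈ B, (∀ x ∈ B, a * x * b = 0) → a = 0 ∨ b = 0)
    (hI : ∀ b ∈ B, ∀ x ∈ I, b * x ∈ I ∧ x * b ∈ I) {x : A} (hxI : x ∈ I)
    (hx : IsVeroneseHomogeneous 𝒜 n x) (hx0 : x ≠ 0) (c : ZMod n) :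
    ∃ d ≠ 0, IsVeroneseHomogeneous 𝒜 n d ∧ SandwichMem 𝒜 n I c d := by
  by_cases hxc : SandwichMem 𝒜 n I c x
  · exact ⟨x, hx0, hx, hxc⟩
  simp only [SandwichMem, not_forall] at hxc
  obtain ⟨i, j, hi, hij, u, hu, w, hw, huxw⟩ := hxc
  have hz : IsVeroneseHomogeneous 𝒜 n (u * x * w) := hx.mul_mul_of_add_eq_zero hu hw hij
  have hz0 : u * x * w ≠ 0 := fun h => huxw (h ▸ zero_mem I)
  -- `κ := w β x β' u` is nonzero because `u x κ x w = z β x β' z` with `z = u x w`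
  obtain ⟨β, hβ, hβ0⟩ := hB.exists_mul_mul_ne_zero hBprime (hz.mem hB) (hx.mem hB) hz0 hx0
  obtain ⟨β', hβ', hβ'0⟩ :=
    hB.exists_mul_mul_ne_zero hBprime ((hz.mul hβ).mul hx |>.mem hB) (hz.mem hB) hβ0 hz0
  have hmI : β * x * β' ∈ I := (hI β' (hβ'.mem hB) _ (hI β (hβ.mem hB) x hxI).1).2
  have hji : (j : ZMod n) + i = 0 := by rwa [add_comm]
  refine ⟨w * (β * x * β') * u, fun h0 => hβ'0 ?_,
    ((hβ.mul hx).mul hβ').mul_mul_of_add_eq_zero hw hu hji, ?_⟩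
  · calc u * x * w * β * x * β' * (u * x * w)
        = u * x * (w * (β * x * β') * u) * x * w := by simp only [mul_assoc]
      _ = 0 := by rw [h0, mul_zero, zero_mul, zero_mul]
  · intro i' j' hi' hij' u' hu' w' hw'
    have hu'w : IsVeroneseHomogeneous 𝒜 n (u' * w) :=
      ⟨i' + j, by push_cast; linear_combination hi' - hi + hij, SetLike.mul_mem_graded hu' hw⟩
    have huw' : IsVeroneseHomogeneous 𝒜 n (u * w') :=
      ⟨i + j', by push_cast; linear_combination hij' - hi' + hi, SetLike.mul_mem_graded hu hw'⟩
    rw [show u' * (w * (β * x * β') * u) * w' = u' * w * (β * x * β') * (u * w') by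
      simp only [mul_assoc]]
    exact (hI _ (huw'.mem hB) _ (hI _ (hu'w.mem hB) _ hmI).1).2

theorem exists_forall_sandwichMem [NeZero n] (hB : IsVeroneseSubalgebra 𝒜 n B)
    (hBprime : ∀ a ∈ B, ∀ b ∈ B, (∀ x ∈ B, a * x * b = 0) → a = 0 ∨ b = 0)
    (hI : ∀ b ∈ B, ∀ x ∈ I, b * x ∈ I ∧ x * b ∈ I) {x : A} (hxI : x ∈ I)
    (hx : IsVeroneseHomogeneous 𝒜 n x) (hx0 : x ≠ 0) :
    ∃ d ≠ 0, IsVeroneseHomogeneous 𝒜 n d ∧ ∀ c, SandwichMem 𝒜 n I c d := by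
  suffices ∀ s : Finset (ZMod n),
      ∃ d ≠ 0, IsVeroneseHomogeneous 𝒜 n d ∧ ∀ c ∈ s, SandwichMem 𝒜 n I c d by
    simpa using this Finset.univ
  intro s
  induction s using Finset.induction_on with
  | empty => exact ⟨x, hx0, hx, by simp⟩
  | insert c s _ ih =>
    obtain ⟨d, hd0, hd, hds⟩ := ih
    obtain ⟨z, hz0, hz, hzc⟩ := exists_sandwichMem hB hBprime hI hxI hx hx0 c
    obtain ⟨y, hy, hdyz⟩ := hB.exists_mul_mul_ne_zero hBprime (hd.mem hB) (hz.mem hB) hd0 hz0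
    refine ⟨d * y * z, hdyz, (hd.mul hy).mul hz, fun c' hc' => ?_⟩
    rcases Finset.mem_insert.mp hc' with rfl | hc'
    · exact hzc.mul_left (hd.mul hy)
    · rw [mul_assoc]
      exact (hds c' hc').mul_right (hy.mul hz)

end Sandwich

section SandwichSpan

variable {k A : Type*} [CommSemiring k] [Semiring A] [Algebra k A]
  (𝒜 : ℕ → Submodule k A) [GradedAlgebra 𝒜]

/-- For homogeneous `d` this is the two-sided ideal of `A` generated by `d`. -/
def sandwichSpan (d : A) : Submodule k A :=
  Submodule.span k {z | ∃ i j, ∃ u ∈ 𝒜 i, ∃ w ∈ 𝒜 j, z = u * d * w}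

variable {𝒜} {d : A}

theorem self_mem_sandwichSpan : d ∈ sandwichSpan 𝒜 d :=
  Submodule.subset_span
    ⟨0, 0, 1, SetLike.GradedOne.one_mem, 1, SetLike.GradedOne.one_mem, by rw [one_mul, mul_one]⟩

theorem mul_mem_sandwichSpan_left (a : A) {t : A} (ht : t ∈ sandwichSpan 𝒜 d) :
    a * t ∈ sandwichSpan 𝒜 d := by
  refine (Submodule.span_le.mpr ?_ : sandwichSpan 𝒜 d ≤
    (sandwichSpan 𝒜 d).comap (LinearMap.mulLeft k a)) ht
  rintro _ ⟨i, j, u, hu, w, hw, rfl⟩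
  show a * (u * d * w) ∈ sandwichSpan 𝒜 d
  refine Submodule.mul_mem_of_forall_homogeneous_mul_mem 𝒜 (fun m a' ha' => ?_) a
  exact Submodule.subset_span
    ⟨m + i, j, a' * u, SetLike.mul_mem_graded ha' hu, w, hw, by simp only [mul_assoc]⟩

theorem mul_mem_sandwichSpan_right (a : A) {t : A} (ht : t ∈ sandwichSpan 𝒜 d) :
    t * a ∈ sandwichSpan 𝒜 d := by
  refine (Submodule.span_le.mpr ?_ : sandwichSpan 𝒜 d ≤
    (sandwichSpan 𝒜 d).comap (LinearMap.mulRight k a)) ht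
  rintro _ ⟨i, j, u, hu, w, hw, rfl⟩
  show u * d * w * a ∈ sandwichSpan 𝒜 d
  refine Submodule.mul_mem_of_forall_mul_homogeneous_mem 𝒜 (fun m a' ha' => ?_) a
  exact Submodule.subset_span
    ⟨i, j + m, u, hu, w * a', SetLike.mul_mem_graded hw ha', by simp only [mul_assoc]⟩

theorem isHomogeneous_sandwichSpan {e : ℕ} (hd : d ∈ 𝒜 e) :
    SetLike.IsHomogeneous 𝒜 (sandwichSpan 𝒜 d) := by
  refine Submodule.isHomogeneous_span 𝒜 ?_
  rintro _ ⟨i, j, u, hu, w, hw, rfl⟩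
  exact ⟨i + e + j, SetLike.mul_mem_graded (SetLike.mul_mem_graded hu hd) hw⟩

theorem decompose_mem_of_mem_sandwichSpan {n : ℕ} {I : Submodule k A} {e : ℕ}
    (hd : d ∈ 𝒜 e) (he : (e : ZMod n) = 0)
    (hdI : ∀ ⦃i j : ℕ⦄, (i : ZMod n) + j = 0 → ∀ u ∈ 𝒜 i, ∀ w ∈ 𝒜 j, u * d * w ∈ I)
    {t : A} (ht : t ∈ sandwichSpan 𝒜 d) {m : ℕ} (hm : (m : ZMod n) = 0) :
    (decompose 𝒜 t m : A) ∈ I := by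
  refine (Submodule.span_le.mpr ?_ : sandwichSpan 𝒜 d ≤ I.comap (GradedAlgebra.proj 𝒜 m)) ht
  rintro _ ⟨i, j, u, hu, w, hw, rfl⟩
  have huw := SetLike.mul_mem_graded (SetLike.mul_mem_graded hu hd) hw
  simp only [SetLike.mem_coe, Submodule.mem_comap, GradedAlgebra.proj_apply,
    decompose_of_mem 𝒜 huw, coe_of_apply]
  split_ifs with h
  · refine hdI ?_ u hu w hw
    rw [← h] at hm
    push_cast at hm
    linear_combination hm - he
  · exact zero_mem I

theorem IsVeroneseSubalgebra.mem_of_mem_sandwichSpan {n : ℕ} {B : Subalgebra k A}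
    (hB : IsVeroneseSubalgebra 𝒜 n B) {I : Submodule k A} {e : ℕ} (hd : d ∈ 𝒜 e)
    (he : (e : ZMod n) = 0)
    (hdI : ∀ ⦃i j : ℕ⦄, (i : ZMod n) + j = 0 → ∀ u ∈ 𝒜 i, ∀ w ∈ 𝒜 j, u * d * w ∈ I)
    {t : A} (ht : t ∈ sandwichSpan 𝒜 d) (htB : t ∈ B) : t ∈ I := by
  classical
  rw [← sum_support_decompose 𝒜 t]
  refine sum_mem fun m _ => ?_
  by_cases hm : (m : ZMod n) = 0
  · exact decompose_mem_of_mem_sandwichSpan hd he hdI ht hm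
  · rw [hB.decompose_eq_zero htB hm]
    exact zero_mem I

end SandwichSpan

theorem veronese_projectively_simple_general
    (k : Type*) [Field k] {A : Type*} [Ring A] [Algebra k A]
    (𝒜 : ℕ → Submodule k A) [GradedAlgebra 𝒜]
    -- `A` is projectively simple
    (hpsA : SubProjSimple 𝒜 ⊤)
    (n : ℕ) (hn : 2 ≤ n)
    -- `B` is the `n`-th Veronese subring `A^{(n)} = ⊕_i A_{n i}`
    (B : Subalgebra k A)
    (hB : ∀ x : A, x ∈ B ↔ ∀ m : ℕ, ¬ (n ∣ m) → (DirectSum.decompose 𝒜 x m : A) = 0)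
    -- `B` is a prime ring
    (hBprime : ∀ a ∈ B, ∀ b ∈ B, (∀ x ∈ B, a * x * b = 0) → a = 0 ∨ b = 0)
    -- `A` is finitely generated as a right `B`-module or as a left `B`-module
    (hfg : (∃ S : Finset A, ∀ a : A,
              a ∈ AddSubgroup.closure {y : A | ∃ s ∈ S, ∃ b ∈ B, y = s * b}) ∨
           (∃ S : Finset A, ∀ a : A,
              a ∈ AddSubgroup.closure {y : A | ∃ s ∈ S, ∃ b ∈ B, y = b * s})) :
    SubProjSimple 𝒜 B := by
  replace hB : IsVeroneseSubalgebra 𝒜 n B := hB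
  have : NeZero n := ⟨by omega⟩
  refine ⟨fun hBfin => hpsA.1 ?_, fun I hIB hI0 hI hIgr => ?_⟩
  · have := Module.Finite.of_finite_subalgebra hfg
    infer_instance
  obtain ⟨x, hxI, hx0, hxh⟩ :=
    Submodule.exists_isHomogeneousElem_ne_zero_mem 𝒜 (fun i _ hx => hIgr _ hx i) hI0
  obtain ⟨d, hd0, ⟨e, he, hde⟩, hd⟩ := exists_forall_sandwichMem hB hBprime hI hxI
    (hB.isVeroneseHomogeneous (hIB hxI) hx0 hxh) hx0
  have : FiniteDimensional k (↥(⊤ : Subalgebra k A).toSubmodule ⧸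
      (sandwichSpan 𝒜 d).comap (⊤ : Subalgebra k A).toSubmodule.subtype) :=
    hpsA.2 _ (by simp) (Submodule.ne_bot_iff _ |>.mpr ⟨d, self_mem_sandwichSpan, hd0⟩)
      (fun a _ t ht => ⟨mul_mem_sandwichSpan_left a ht, mul_mem_sandwichSpan_right a ht⟩)
      (fun t ht i => isHomogeneous_sandwichSpan hde i ht)
  exact Submodule.finiteDimensional_quotient_comap_of_inf_le
    (Q := (⊤ : Subalgebra k A).toSubmodule) (by simp)
    fun t ⟨htd, htB⟩ => hB.mem_of_mem_sandwichSpan hde he (fun i j hij => hd i rfl hij) htd htB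

theorem veronese_projectively_simple
    (k : Type*) [Field k] {A : Type*} [Ring A] [Algebra k A]
    (𝒜 : ℕ → Submodule k A) [GradedAlgebra 𝒜]
    (hlf : ∀ n, FiniteDimensional k (𝒜 n))
    (hNoethA : IsNoetherianRing A) (hNoethAop : IsNoetherianRing Aᵐᵒᵖ)
    -- `A` is prime
    (hprimeA : ∀ a b : A, (∀ x : A, a * x * b = 0) → a = 0 ∨ b = 0)
    -- `A` is projectively simple
    (hpsA : SubProjSimple 𝒜 ⊤)
    (n : ℕ) (hn : 2 ≤ n)
    -- `B` is the `n`-th Veronese subring `A^{(n)} = ⊕_i A_{n i}`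
    (B : Subalgebra k A)
    (hB : ∀ x : A, x ∈ B ↔ ∀ m : ℕ, ¬ (n ∣ m) → (DirectSum.decompose 𝒜 x m : A) = 0)
    -- `B` is a prime ring
    (hBprime : ∀ a ∈ B, ∀ b ∈ B, (∀ x ∈ B, a * x * b = 0) → a = 0 ∨ b = 0)
    -- `A` is finitely generated as a right `B`-module or as a left `B`-module
    (hfg : (∃ S : Finset A, ∀ a : A,
              a ∈ AddSubgroup.closure {y : A | ∃ s ∈ S, ∃ b ∈ B, y = s * b}) ∨
           (∃ S : Finset A, ∀ a : A,
              a ∈ AddSubgroup.closure {y : A | ∃ s ∈ S, ∃ b ∈ B, y = b * s})) :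
    SubProjSimple 𝒜 B :=
  veronese_projectively_simple_general k 𝒜 hpsA n hn B hB hBprime hfg
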